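/- arXiv:2010.09478 — 4 statements merged into one kernel-verified Lean document; each statement's English description precedes it below -/
import Mathlib

section
/- Let P, Q be probability distributions on a finite set of size N with Q(x) > 0 for all x. Then KL(P||Q) ≤ (‖P - Q‖₁)² / min_x Q(x), where ‖P-Q‖₁ = Σ_x |P(x) - Q(x)| (inverse Pinsker inequality, weak form). -/
/-!
Bounding `log t ≤ t - 1` termwise turns the divergence into the χ²-divergence
`∑ (p - q)² / q`, which is at most `∑ (p - q)² / min q`; and a sum of squares of
nonnegative numbers is at most the square of their sum.
-/

open Finset

lemma Real.mul_log_div_le_sq_div_sub {a b : ℝ} (ha : 0 ≤ a) (hb : 0 < b) :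
    a * Real.log (a / b) ≤ a ^ 2 / b - a := by
  obtain rfl | ha := ha.eq_or_lt
  · simp
  calc a * Real.log (a / b) ≤ a * (a / b - 1) :=
        mul_le_mul_of_nonneg_left (Real.log_le_sub_one_of_pos (div_pos ha hb)) ha.le
    _ = a ^ 2 / b - a := by ring

section Divergence

variable {ι : Type*} {s : Finset ι} {p q : ι → ℝ}

lemma sum_mul_log_div_le_sum_sq_div (hp : ∀ x ∈ s, 0 ≤ p x) (hq : ∀ x ∈ s, 0 < q x)
    (hpq : ∑ x ∈ s, p x = ∑ x ∈ s, q x) :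
    ∑ x ∈ s, p x * Real.log (p x / q x) ≤ ∑ x ∈ s, (p x - q x) ^ 2 / q x := by
  have hsq : ∀ x ∈ s, (p x - q x) ^ 2 / q x = (p x ^ 2 / q x - p x) - p x + q x := by
    intro x hx
    have := (hq x hx).ne'
    field_simp
    ring
  calc ∑ x ∈ s, p x * Real.log (p x / q x) ≤ ∑ x ∈ s, (p x ^ 2 / q x - p x) :=
        sum_le_sum fun x hx => Real.mul_log_div_le_sq_div_sub (hp x hx) (hq x hx)
    _ = ∑ x ∈ s, (p x - q x) ^ 2 / q x := by
        rw [sum_congr rfl hsq]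
        simp only [sum_add_distrib, sum_sub_distrib, hpq]
        ring

lemma sum_sq_div_le_sum_sq_div_of_le {m : ℝ} (f : ι → ℝ) (hm : 0 < m) (hmq : ∀ x ∈ s, m ≤ q x) :
    ∑ x ∈ s, f x ^ 2 / q x ≤ (∑ x ∈ s, f x ^ 2) / m := by
  rw [sum_div]
  exact sum_le_sum fun x hx => div_le_div_of_nonneg_left (sq_nonneg _) hm (hmq x hx)

end Divergence

lemma sum_sq_le_sq_sum_abs {ι : Type*} (s : Finset ι) (f : ι → ℝ) :
    ∑ x ∈ s, f x ^ 2 ≤ (∑ x ∈ s, |f x|) ^ 2 := by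
  simpa only [sq_abs] using sum_sq_le_sq_sum_of_nonneg (s := s) fun x _ => abs_nonneg (f x)

/-- Inverse Pinsker inequality (weak form): for probability vectors `p, q` on a finite
nonempty set with `q` everywhere positive,
`KL(P‖Q) ≤ ‖P - Q‖₁² / min_x Q(x)`. -/
theorem inverse_pinsker_weak {S : Type*} [Fintype S] [Nonempty S]
    (p q : S → ℝ) (hp0 : ∀ x, 0 ≤ p x) (hq0 : ∀ x, 0 < q x)
    (hp1 : ∑ x, p x = 1) (hq1 : ∑ x, q x = 1) :
    ∑ x, p x * Real.log (p x / q x) ≤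
      (∑ x, |p x - q x|) ^ 2 / (Finset.univ.inf' Finset.univ_nonempty q) := by
  set m := Finset.univ.inf' Finset.univ_nonempty q
  have hm : 0 < m := (lt_inf'_iff _).2 fun x _ => hq0 x
  calc ∑ x, p x * Real.log (p x / q x) ≤ ∑ x, (p x - q x) ^ 2 / q x :=
        sum_mul_log_div_le_sum_sq_div (fun x _ => hp0 x) (fun x _ => hq0 x) (hp1.trans hq1.symm)
    _ ≤ (∑ x, (p x - q x) ^ 2) / m :=
        sum_sq_div_le_sum_sq_div_of_le _ hm fun x _ => inf'_le q (mem_univ x)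
    _ ≤ (∑ x, |p x - q x|) ^ 2 / m := by
        gcongr
        exact sum_sq_le_sq_sum_abs _ _
end

section
/- Let ε₁,...,ε_n be independent Rademacher random variables (P(ε_i = 1) = P(ε_i = -1) = 1/2), and let A ⊆ ℝⁿ be a finite set with ‖a‖₂ ≤ D for all a ∈ A. Then E[max_{a∈A} Σ_{i=1}^n ε_i a_i] ≤ D √(2 log |A|) (Massart's finite class lemma). -/
/-!
For `t > 0`, Jensen's inequality and the bound of a maximum of positive numbers by their sum give
`exp (t 𝔼 maxₐ Zₐ) ≤ 𝔼 exp (t maxₐ Zₐ) ≤ ∑ₐ 𝔼 exp (t Zₐ)`. Each `Zₐ = ∑ εᵢ aᵢ` is a sum of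
independent variables with `𝔼 exp (s εᵢ aᵢ) = cosh (s aᵢ) ≤ exp (s² aᵢ² / 2)`, so
`𝔼 exp (t Zₐ) ≤ exp (t² D² / 2)`. Taking logarithms, `𝔼 maxₐ Zₐ ≤ log |A| / t + t D² / 2`,
and `t = √(2 log |A|) / D` gives the bound.
-/

open MeasureTheory ProbabilityTheory Real

open scoped NNReal

open Finset

lemma le_sqrt_two_mul_mul_of_forall_mul_le {x a b : ℝ} (ha : 0 ≤ a) (hb : 0 ≤ b)
    (h : ∀ t > 0, t * x ≤ a + b * t ^ 2 / 2) : x ≤ √(2 * b * a) := by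
  rcases le_or_gt x 0 with hx | hx
  · exact hx.trans (sqrt_nonneg _)
  rcases hb.eq_or_lt with rfl | hb
  · have := h ((a + 1) / x) (by positivity)
    rw [div_mul_cancel₀ _ hx.ne'] at this
    linarith
  · rw [le_sqrt hx.le (by positivity)]
    have := h (x / b) (div_pos hx hb)
    field_simp at this
    nlinarith

lemma MeasureTheory.Integrable.finset_sup' {α ι β : Type*} [MeasurableSpace α] {μ : Measure α}
    [NormedAddCommGroup β] [Lattice β] [HasSolidNorm β] [IsOrderedAddMonoid β]
    {s : Finset ι} (hs : s.Nonempty) {f : ι → α → β} (hf : ∀ i ∈ s, Integrable (f i) μ) :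
    Integrable (fun a ↦ s.sup' hs (f · a)) μ := by
  simp_rw [← Finset.sup'_apply]
  exact Finset.sup'_induction hs f (p := (Integrable · μ)) (fun _ hf _ hg ↦ hf.sup hg) hf

namespace ProbabilityTheory

variable {Ω ι : Type*} [MeasurableSpace Ω] {μ : Measure Ω} {X : ι → Ω → ℝ} {s : Finset ι}

lemma exp_mul_integral_sup'_le_sum_mgf [IsProbabilityMeasure μ] (hs : s.Nonempty) {t : ℝ}
    (ht : 0 ≤ t) (hX : ∀ i ∈ s, Integrable (X i) μ)
    (hexp : ∀ i ∈ s, Integrable (fun ω ↦ exp (t * X i ω)) μ) :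
    exp (t * ∫ ω, s.sup' hs (X · ω) ∂μ) ≤ ∑ i ∈ s, mgf (X i) μ t := by
  have hexp_sup' (ω : Ω) : exp (t * s.sup' hs (X · ω)) = s.sup' hs fun i ↦ exp (t * X i ω) :=
    Finset.apply_sup'_eq_sup'_comp hs (fun x ↦ exp (t * x))
      (Monotone.map_sup fun _ _ hxy ↦ exp_le_exp.2 (by gcongr))
  have hint_exp_sup' : Integrable (fun ω ↦ exp (t * s.sup' hs (X · ω))) μ := by
    simpa only [hexp_sup'] using Integrable.finset_sup' hs hexp
  calc exp (t * ∫ ω, s.sup' hs (X · ω) ∂μ)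
      ≤ ∫ ω, exp (t * s.sup' hs (X · ω)) ∂μ := by
        rw [← integral_const_mul]
        exact convexOn_exp.map_integral_le continuous_exp.continuousOn isClosed_univ
          (ae_of_all _ fun _ ↦ Set.mem_univ _) ((Integrable.finset_sup' hs hX).const_mul t)
          hint_exp_sup'
    _ ≤ ∫ ω, ∑ i ∈ s, exp (t * X i ω) ∂μ := by
      refine integral_mono hint_exp_sup' (integrable_finsetSum s hexp) fun ω ↦ ?_
      rw [hexp_sup']
      exact Finset.sup'_le hs _ fun i hi ↦
        Finset.single_le_sum (f := fun i ↦ exp (t * X i ω)) (fun _ _ ↦ (exp_pos _).le) hi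
    _ = ∑ i ∈ s, mgf (X i) μ t := integral_finsetSum s hexp

lemma mul_integral_sup'_le_of_hasSubgaussianMGF [IsProbabilityMeasure μ] (hs : s.Nonempty)
    {c : ℝ≥0} (hX : ∀ i ∈ s, HasSubgaussianMGF (X i) c μ) {t : ℝ} (ht : 0 ≤ t) :
    t * ∫ ω, s.sup' hs (X · ω) ∂μ ≤ log #s + c * t ^ 2 / 2 := by
  have hsum_mgf : ∑ i ∈ s, mgf (X i) μ t ≤ #s * exp (c * t ^ 2 / 2) := by
    simpa using Finset.sum_le_sum fun i hi ↦ (hX i hi).mgf_le t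
  rw [← log_exp (c * t ^ 2 / 2), ← log_mul (by simpa using hs.ne_empty) (exp_pos _).ne',
    le_log_iff_exp_le (by have := hs.card_pos; positivity)]
  exact (exp_mul_integral_sup'_le_sum_mgf hs ht (fun i hi ↦ (hX i hi).integrable)
    fun i hi ↦ (hX i hi).integrable_exp_mul t).trans hsum_mgf

theorem integral_sup'_le_of_hasSubgaussianMGF [IsProbabilityMeasure μ] (hs : s.Nonempty)
    {c : ℝ≥0} (hX : ∀ i ∈ s, HasSubgaussianMGF (X i) c μ) :
    ∫ ω, s.sup' hs (X · ω) ∂μ ≤ √(2 * c * log #s) :=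
  le_sqrt_two_mul_mul_of_forall_mul_le (log_natCast_nonneg _) c.2
    fun _ ht ↦ mul_integral_sup'_le_of_hasSubgaussianMGF hs hX ht.le

lemma HasSubgaussianMGF.mono {Y : Ω → ℝ} {c d : ℝ≥0} (hY : HasSubgaussianMGF Y c μ)
    (hcd : c ≤ d) : HasSubgaussianMGF Y d μ where
  integrable_exp_mul := hY.integrable_exp_mul
  mgf_le t := (hY.mgf_le t).trans (exp_le_exp.2 (by gcongr))

lemma hasSubgaussianMGF_sum_mul_of_iIndepFun (hindep : iIndepFun X μ) {c : ℝ≥0}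
    (hX : ∀ i ∈ s, HasSubgaussianMGF (X i) c μ) (a : ι → ℝ) :
    HasSubgaussianMGF (fun ω ↦ ∑ i ∈ s, X i ω * a i) ((∑ i ∈ s, ‖a i‖₊ ^ 2) * c) μ := by
  rw [Finset.sum_mul]
  refine HasSubgaussianMGF.sum_of_iIndepFun
    (hindep.comp (fun i x ↦ x * a i) fun i ↦ measurable_mul_const (a i)) fun i hi ↦ ?_
  convert (hX i hi).const_mul (a i) using 1
  · ext ω; exact mul_comm _ _
  · congr 1; ext; exact sq_abs (a i)

def IsRademacher (Y : Ω → ℝ) (μ : Measure Ω) : Prop :=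
  μ {ω | Y ω = 1} = 1 / 2 ∧ μ {ω | Y ω = -1} = 1 / 2

namespace IsRademacher

variable [IsProbabilityMeasure μ] {Y : Ω → ℝ}

lemma ae_eq_one_or_neg_one (hY : Measurable Y) (h : IsRademacher Y μ) :
    ∀ᵐ ω ∂μ, Y ω = 1 ∨ Y ω = -1 := by
  have hmeas : MeasurableSet {ω | Y ω = -1} := hY (measurableSet_singleton _)
  have hdisj : Disjoint {ω | Y ω = 1} {ω | Y ω = -1} :=
    Set.disjoint_left.2 fun ω h1 h2 ↦ by norm_num [show Y ω = 1 from h1] at h2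
  have hunion : μ ({ω | Y ω = 1} ∪ {ω | Y ω = -1}) = 1 := by
    rw [measure_union hdisj hmeas, h.1, h.2, ENNReal.add_halves]
  exact ae_iff_measure_eq ((hY (measurableSet_singleton _)).union hmeas).nullMeasurableSet
    |>.2 (hunion.trans measure_univ.symm)

lemma comp_ae_eq (hY : Measurable Y) (h : IsRademacher Y μ) (g : ℝ → ℝ) :
    (fun ω ↦ g (Y ω)) =ᵐ[μ] fun ω ↦
      {ω | Y ω = 1}.indicator (fun _ ↦ g 1) ω + {ω | Y ω = -1}.indicator (fun _ ↦ g (-1)) ω := by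
  filter_upwards [h.ae_eq_one_or_neg_one hY] with ω hω
  rcases hω with hω | hω <;> norm_num [Set.indicator, hω]

lemma integrable_comp (hY : Measurable Y) (h : IsRademacher Y μ) (g : ℝ → ℝ) :
    Integrable (fun ω ↦ g (Y ω)) μ :=
  (((integrable_const _).indicator (hY (measurableSet_singleton _))).add
    ((integrable_const _).indicator (hY (measurableSet_singleton _)))).congr
    (h.comp_ae_eq hY g).symm

lemma integral_comp (hY : Measurable Y) (h : IsRademacher Y μ) (g : ℝ → ℝ) :
    ∫ ω, g (Y ω) ∂μ = (g 1 + g (-1)) / 2 := by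
  have hmeas₁ : MeasurableSet {ω | Y ω = 1} := hY (measurableSet_singleton _)
  have hmeas₂ : MeasurableSet {ω | Y ω = -1} := hY (measurableSet_singleton _)
  rw [integral_congr_ae (h.comp_ae_eq hY g), integral_add
    ((integrable_const _).indicator hmeas₁) ((integrable_const _).indicator hmeas₂),
    integral_indicator_const _ hmeas₁, integral_indicator_const _ hmeas₂,
    measureReal_def, measureReal_def, h.1, h.2]
  norm_num
  ring

lemma mgf_eq_cosh (hY : Measurable Y) (h : IsRademacher Y μ) (t : ℝ) : mgf Y μ t = cosh t := by
  rw [mgf, h.integral_comp hY (fun x ↦ exp (t * x)), cosh_eq, mul_one, mul_neg_one]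

lemma hasSubgaussianMGF (hY : Measurable Y) (h : IsRademacher Y μ) : HasSubgaussianMGF Y 1 μ where
  integrable_exp_mul t := h.integrable_comp hY (fun x ↦ exp (t * x))
  mgf_le t := by simpa [h.mgf_eq_cosh hY] using cosh_le_exp_half_sq t

end IsRademacher

end ProbabilityTheory

/-- Massart's finite class lemma: if `ε₁, …, εₙ` are independent Rademacher signs and
`A ⊆ ℝⁿ` is a finite nonempty set with `‖a‖₂ ≤ D` for all `a ∈ A`, then
`E[max_{a ∈ A} ∑ i, εᵢ aᵢ] ≤ D √(2 log |A|)`. -/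
theorem massart_finite_class {Ω : Type*} [MeasurableSpace Ω]
    (μ : Measure Ω) [IsProbabilityMeasure μ]
    (n : ℕ) (ε : Fin n → Ω → ℝ) (hmeas : ∀ i, Measurable (ε i))
    (hindep : iIndepFun ε μ)
    (hrad : ∀ i, μ {ω | ε i ω = 1} = 1/2 ∧ μ {ω | ε i ω = -1} = 1/2)
    (A : Finset (Fin n → ℝ)) (hA : A.Nonempty) (D : ℝ)
    (hD : ∀ a ∈ A, Real.sqrt (∑ i, (a i) ^ 2) ≤ D) :
    ∫ ω, A.sup' hA (fun a => ∑ i, ε i ω * a i) ∂μ ≤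
      D * Real.sqrt (2 * Real.log A.card) := by
  have hD₀ : 0 ≤ D := by
    obtain ⟨a, ha⟩ := hA
    exact (sqrt_nonneg _).trans (hD a ha)
  have hsub (a : Fin n → ℝ) (ha : a ∈ A) :
      HasSubgaussianMGF (fun ω ↦ ∑ i, ε i ω * a i) (‖D‖₊ ^ 2) μ := by
    refine (hasSubgaussianMGF_sum_mul_of_iIndepFun hindep
      (fun i _ ↦ IsRademacher.hasSubgaussianMGF (hmeas i) (hrad i)) a).mono ?_
    rw [mul_one, ← NNReal.coe_le_coe]
    push_cast
    simpa [sq_abs] using (sqrt_le_left hD₀).1 (hD a ha)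
  calc ∫ ω, A.sup' hA (fun a => ∑ i, ε i ω * a i) ∂μ
      ≤ √(2 * (‖D‖₊ ^ 2 : ℝ≥0) * log #A) :=
        integral_sup'_le_of_hasSubgaussianMGF (X := fun a ω ↦ ∑ i, ε i ω * a i) hA hsub
    _ = D * √(2 * log #A) := by
        rw [NNReal.coe_pow, coe_nnnorm, norm_eq_abs, sq_abs, mul_comm 2, mul_assoc,
          sqrt_mul (sq_nonneg D), sqrt_sq hD₀]
end

section
/- Bretagnolle–Huber inequality: for any two probability measures P, Q on the same measurable space and any event E, P(E) + Q(Eᶜ) ≥ (1/2) exp(−KL(P||Q)). -/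
open MeasureTheory Real
open scoped ENNReal Classical

/-- The Kullback–Leibler divergence `KL(P‖Q) = ∫ log (dP/dQ) dP`, taken to be `+∞`
if `P` is not absolutely continuous w.r.t. `Q` (or the log-likelihood ratio is not
integrable). -/
noncomputable def klDiv {Ω : Type*} [MeasurableSpace Ω] (P Q : Measure Ω) : ℝ≥0∞ :=
  if P ≪ Q ∧ Integrable (llr P Q) P then ENNReal.ofReal (∫ x, llr P Q x ∂P) else ⊤

/-!
Write `f = dP/dQ`. Then `P E + Q Eᶜ ≥ ∫ min(f, 1) dQ`. Since `f = min(f, 1) · max(f, 1)` and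
`∫ max(f, 1) dQ ≤ ∫ (f + 1) dQ ≤ 2`, Cauchy–Schwarz bounds the square of the Bhattacharyya
coefficient `∫ √f dQ` by `2 ∫ min(f, 1) dQ`. Finally, `∫ √f dQ = ∫ exp(-½ log f) dP`, which is at
least `exp(-½ KL(P‖Q))` by Jensen's inequality.
-/

section Bhattacharyya

variable {α : Type*} [MeasurableSpace α] {μ ν : Measure α}

/-- For `μ ≪ ν` this is the Bhattacharyya coefficient `∫ √(dμ/dν) dν`; in general the singular
part of `μ` contributes nothing to it. -/
noncomputable def bhattacharyyaCoeff (μ ν : Measure α) : ℝ≥0∞ :=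
  ∫⁻ x, μ.rnDeriv ν x ^ (1 / 2 : ℝ) ∂ν

lemma lintegral_min_rnDeriv_one_le {E : Set α} (hE : MeasurableSet E) :
    ∫⁻ x, min (μ.rnDeriv ν x) 1 ∂ν ≤ μ E + ν Eᶜ := by
  rw [← lintegral_add_compl _ hE]
  gcongr
  · exact (setLIntegral_mono' hE fun x _ ↦ min_le_left _ _).trans
      (Measure.setLIntegral_rnDeriv_le E)
  · calc ∫⁻ x in Eᶜ, min (μ.rnDeriv ν x) 1 ∂ν ≤ ∫⁻ _ in Eᶜ, 1 ∂ν :=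
          lintegral_mono fun x ↦ min_le_right _ _
      _ = ν Eᶜ := setLIntegral_one _

lemma lintegral_max_rnDeriv_one_le :
    ∫⁻ x, max (μ.rnDeriv ν x) 1 ∂ν ≤ μ Set.univ + ν Set.univ :=
  calc ∫⁻ x, max (μ.rnDeriv ν x) 1 ∂ν ≤ ∫⁻ x, μ.rnDeriv ν x + 1 ∂ν :=
        lintegral_mono fun _ ↦ max_le le_self_add le_add_self
    _ = ∫⁻ x, μ.rnDeriv ν x ∂ν + ν Set.univ := by
        rw [lintegral_add_right _ measurable_const, lintegral_one]
    _ ≤ μ Set.univ + ν Set.univ := by gcongr; exact Measure.lintegral_rnDeriv_le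

lemma lintegral_rpow_half_mul_sq_le {f g : α → ℝ≥0∞} (hf : AEMeasurable f μ)
    (hg : AEMeasurable g μ) :
    (∫⁻ x, (f x * g x) ^ (1 / 2 : ℝ) ∂μ) ^ 2 ≤ (∫⁻ x, f x ∂μ) * ∫⁻ x, g x ∂μ := by
  have hCS : ∫⁻ x, (f x * g x) ^ (1 / 2 : ℝ) ∂μ
      ≤ (∫⁻ x, f x ∂μ) ^ (1 / 2 : ℝ) * (∫⁻ x, g x ∂μ) ^ (1 / 2 : ℝ) := by
    simp_rw [ENNReal.mul_rpow_of_nonneg _ _ (by norm_num : (0 : ℝ) ≤ 1 / 2)]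
    exact ENNReal.lintegral_mul_norm_pow_le hf hg (by norm_num) (by norm_num) (by norm_num)
  calc (∫⁻ x, (f x * g x) ^ (1 / 2 : ℝ) ∂μ) ^ 2
      ≤ ((∫⁻ x, f x ∂μ) ^ (1 / 2 : ℝ) * (∫⁻ x, g x ∂μ) ^ (1 / 2 : ℝ)) ^ 2 := by gcongr
    _ = (∫⁻ x, f x ∂μ) * ∫⁻ x, g x ∂μ := by
        rw [mul_pow, ← ENNReal.rpow_mul_natCast, ← ENNReal.rpow_mul_natCast]
        norm_num

lemma bhattacharyyaCoeff_sq_le :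
    bhattacharyyaCoeff μ ν ^ 2 ≤ (μ Set.univ + ν Set.univ) * ∫⁻ x, min (μ.rnDeriv ν x) 1 ∂ν := by
  have hf := Measure.measurable_rnDeriv μ ν
  calc bhattacharyyaCoeff μ ν ^ 2
      = (∫⁻ x, (min (μ.rnDeriv ν x) 1 * max (μ.rnDeriv ν x) 1) ^ (1 / 2 : ℝ) ∂ν) ^ 2 := by
        simp only [min_mul_max, mul_one, bhattacharyyaCoeff]
    _ ≤ (∫⁻ x, min (μ.rnDeriv ν x) 1 ∂ν) * ∫⁻ x, max (μ.rnDeriv ν x) 1 ∂ν :=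
        lintegral_rpow_half_mul_sq_le (hf.min measurable_const).aemeasurable
          (hf.max measurable_const).aemeasurable
    _ ≤ (μ Set.univ + ν Set.univ) * ∫⁻ x, min (μ.rnDeriv ν x) 1 ∂ν := by
        rw [mul_comm]; gcongr; exact lintegral_max_rnDeriv_one_le

lemma bhattacharyyaCoeff_eq_lintegral_exp_neg_half_llr [SigmaFinite μ]
    [μ.HaveLebesgueDecomposition ν] (hμν : μ ≪ ν) :
    bhattacharyyaCoeff μ ν = ∫⁻ x, ENNReal.ofReal (exp (-llr μ ν x / 2)) ∂μ := by
  set f := μ.rnDeriv ν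
  have h_llr : ∀ᵐ x ∂μ, ENNReal.ofReal (exp (-llr μ ν x / 2)) = f x ^ (-(1 / 2) : ℝ) := by
    filter_upwards [Measure.rnDeriv_pos hμν, hμν.ae_le (Measure.rnDeriv_lt_top μ ν)]
      with x hpos hlt
    have ht : 0 < (f x).toReal := ENNReal.toReal_pos hpos.ne' hlt.ne
    have h_exp : exp (-llr μ ν x / 2) = (f x).toReal ^ (-(1 / 2) : ℝ) := by
      rw [llr, Real.rpow_def_of_pos ht]
      congr 1
      ring
    rw [h_exp, ← ENNReal.ofReal_rpow_of_pos ht, ENNReal.ofReal_toReal hlt.ne]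
  have h_sqrt : ∀ᵐ x ∂ν, f x * f x ^ (-(1 / 2) : ℝ) = f x ^ (1 / 2 : ℝ) := by
    filter_upwards [Measure.rnDeriv_lt_top μ ν] with x hlt
    rcases eq_or_ne (f x) 0 with h0 | h0
    · rw [h0, zero_mul, ENNReal.zero_rpow_of_pos (by norm_num)]
    · nth_rw 1 [← ENNReal.rpow_one (f x)]
      rw [← ENNReal.rpow_add _ _ h0 hlt.ne]
      norm_num
  rw [lintegral_congr_ae h_llr, ← lintegral_rnDeriv_mul hμν
    ((Measure.measurable_rnDeriv μ ν).pow_const _).aemeasurable, lintegral_congr_ae h_sqrt]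
  rfl

lemma ofReal_exp_integral_le_lintegral [IsProbabilityMeasure μ] {g : α → ℝ}
    (hg : Integrable g μ) :
    ENNReal.ofReal (exp (∫ x, g x ∂μ)) ≤ ∫⁻ x, ENNReal.ofReal (exp (g x)) ∂μ := by
  by_cases h_top : ∫⁻ x, ENNReal.ofReal (exp (g x)) ∂μ = ∞
  · simp [h_top]
  have h_pos : 0 ≤ᵐ[μ] fun x ↦ exp (g x) := .of_forall fun x ↦ (exp_pos _).le
  have h_exp_int : Integrable (fun x ↦ exp (g x)) μ :=
    ⟨continuous_exp.comp_aestronglyMeasurable hg.aestronglyMeasurable,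
      (hasFiniteIntegral_iff_ofReal h_pos).2 (lt_top_iff_ne_top.2 h_top)⟩
  rw [← ofReal_integral_eq_lintegral_ofReal h_exp_int h_pos]
  exact ENNReal.ofReal_le_ofReal <| convexOn_exp.map_integral_le continuous_exp.continuousOn
    isClosed_univ (.of_forall fun _ ↦ Set.mem_univ _) hg h_exp_int

lemma ofReal_exp_neg_half_integral_llr_le_bhattacharyyaCoeff [IsProbabilityMeasure μ]
    [μ.HaveLebesgueDecomposition ν] (hμν : μ ≪ ν) (h_int : Integrable (llr μ ν) μ) :
    ENNReal.ofReal (exp (-(∫ x, llr μ ν x ∂μ) / 2)) ≤ bhattacharyyaCoeff μ ν := by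
  have h := ofReal_exp_integral_le_lintegral (g := fun x ↦ -llr μ ν x / 2)
    (h_int.neg.div_const 2)
  rwa [integral_div, integral_neg, ← bhattacharyyaCoeff_eq_lintegral_exp_neg_half_llr hμν] at h

lemma ofReal_half_exp_neg_integral_llr_le [IsProbabilityMeasure μ] [IsProbabilityMeasure ν]
    (hμν : μ ≪ ν) (h_int : Integrable (llr μ ν) μ) {E : Set α} (hE : MeasurableSet E) :
    ENNReal.ofReal (1 / 2 * exp (-∫ x, llr μ ν x ∂μ)) ≤ μ E + ν Eᶜ := by
  set r := ∫ x, llr μ ν x ∂μ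
  have h_sq : exp (-r) = exp (-r / 2) ^ 2 := by rw [← exp_nat_mul]; ring_nf
  calc ENNReal.ofReal (1 / 2 * exp (-r))
      = 2⁻¹ * ENNReal.ofReal (exp (-r / 2)) ^ 2 := by
        rw [ENNReal.ofReal_mul (by norm_num), h_sq, ENNReal.ofReal_pow (exp_pos _).le, one_div,
          ENNReal.ofReal_inv_of_pos two_pos, ENNReal.ofReal_ofNat]
    _ ≤ 2⁻¹ * ((μ Set.univ + ν Set.univ) * ∫⁻ x, min (μ.rnDeriv ν x) 1 ∂ν) := by
        gcongr
        calc ENNReal.ofReal (exp (-r / 2)) ^ 2 ≤ bhattacharyyaCoeff μ ν ^ 2 := by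
              gcongr
              exact ofReal_exp_neg_half_integral_llr_le_bhattacharyyaCoeff hμν h_int
          _ ≤ _ := bhattacharyyaCoeff_sq_le
    _ = ∫⁻ x, min (μ.rnDeriv ν x) 1 ∂ν := by
        rw [measure_univ, measure_univ, one_add_one_eq_two, ← mul_assoc,
          ENNReal.inv_mul_cancel two_ne_zero ENNReal.ofNat_ne_top, one_mul]
    _ ≤ μ E + ν Eᶜ := lintegral_min_rnDeriv_one_le hE

end Bhattacharyya

/-- Bretagnolle–Huber inequality: for probability measures `P, Q` and any event `E`,
`P(E) + Q(Eᶜ) ≥ ½ exp(−KL(P‖Q))` (where `exp(−∞) = 0`). -/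
theorem bretagnolle_huber {Ω : Type*} [MeasurableSpace Ω]
    (P Q : Measure Ω) [IsProbabilityMeasure P] [IsProbabilityMeasure Q]
    (E : Set Ω) (hE : MeasurableSet E) :
    (if klDiv P Q = ⊤ then 0
      else ENNReal.ofReal ((1 / 2) * Real.exp (-(klDiv P Q).toReal))) ≤
      P E + Q Eᶜ := by
  by_cases h_top : klDiv P Q = ⊤
  · simp [h_top]
  obtain ⟨hPQ, h_int⟩ : P ≪ Q ∧ Integrable (llr P Q) P := by
    by_contra h
    exact h_top (if_neg h)
  rw [if_neg h_top]
  calc ENNReal.ofReal (1 / 2 * exp (-(klDiv P Q).toReal))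
      ≤ ENNReal.ofReal (1 / 2 * exp (-∫ x, llr P Q x ∂P)) := by
        gcongr
        rw [klDiv, if_pos ⟨hPQ, h_int⟩, ENNReal.toReal_ofReal']
        exact le_max_left _ _
    _ ≤ P E + Q Eᶜ := ofReal_half_exp_neg_integral_llr_le hPQ h_int hE
end

section
/- If a policy π is uniformly good (its expected regret is o(T^a) for every a > 0 and every parameter) and for a suboptimal cluster C there exists an alternative parameter θ' with max_{j∈C} KL_j(θ*||θ') ≤ φ + ε and μ_i(θ') > μ*, then liminf_{T→∞} E[N_C(T)]/log T ≥ 1/(φ + ε). Abstractly: if R(T) + R'(T) ≥ (T c / 4)·exp(−(φ+ε)·E N_C(T)) with c > 0 and R(T), R'(T) = o(T^a) for all a > 0, then liminf E N_C(T)/log T ≥ 1/(φ+ε). -/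
open Filter Real
open scoped ENNReal Topology

/-!
Uniform goodness makes `R + R'` smaller than `(c / 4) T ^ a` for every `a > 0`, so the
assumed lower bound forces `T exp (-λ N(T)) ≤ T ^ a`, i.e. `N(T) ≥ (1 - a) log T / λ`,
eventually in `T`. Letting `a → 0` gives the bound `1 / λ` on the liminf.
-/

theorem ENNReal.ofReal_le_liminf_ofReal {ι : Type*} {l : Filter ι} {f : ι → ℝ} {x : ℝ}
    (h : ∀ b < x, ∀ᶠ i in l, b ≤ f i) :
    ENNReal.ofReal x ≤ liminf (fun i => ENNReal.ofReal (f i)) l := by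
  refine le_of_forall_lt fun y hy => ?_
  have hy_top : y ≠ ∞ := ne_top_of_lt hy
  obtain ⟨b, hyb, hbx⟩ := exists_between ((ENNReal.lt_ofReal_iff_toReal_lt hy_top).mp hy)
  refine lt_of_lt_of_le ((ENNReal.lt_ofReal_iff_toReal_lt hy_top).mpr hyb) ?_
  exact le_liminf_of_le (by isBoundedDefault)
    ((h b hbx).mono fun i hi => ENNReal.ofReal_le_ofReal hi)

theorem eventually_le_mul_rpow_of_tendsto_div {f : ℕ → ℝ} {a ε : ℝ}
    (hf : Tendsto (fun T : ℕ => f T / (T : ℝ) ^ a) atTop (𝓝 0)) (hε : 0 < ε) :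
    ∀ᶠ T : ℕ in atTop, f T ≤ ε * (T : ℝ) ^ a := by
  filter_upwards [hf.eventually_lt_const hε, eventually_gt_atTop 0] with T hlt hT
  rw [div_lt_iff₀ (rpow_pos_of_pos (Nat.cast_pos.mpr hT) a)] at hlt
  exact hlt.le

theorem one_sub_div_le_div_log_of_mul_exp_le {T n a lam : ℝ} (hT : 1 < T) (hlam : 0 < lam)
    (h : T * exp (-lam * n) ≤ T ^ a) : (1 - a) / lam ≤ n / log T := by
  have hlogT : 0 < log T := log_pos hT
  have hlog : log T - lam * n ≤ a * log T := by
    have := log_le_log (by positivity) h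
    rw [log_mul (by positivity) (exp_pos _).ne', log_exp, log_rpow (by positivity)] at this
    linarith
  rw [div_le_div_iff₀ hlam hlogT]
  linarith

theorem uniformly_good_liminf_lower_bound_general
    (N R R' : ℕ → ℝ) (c lam : ℝ) (hc : 0 < c) (hlam : 0 < lam)
    (hineq : ∀ T : ℕ, (c * T / 4) * Real.exp (-lam * N T) ≤ R T + R' T)
    (hgood : ∀ a : ℝ, 0 < a →
      Tendsto (fun T : ℕ => R T / (T : ℝ) ^ a) atTop (𝓝 0) ∧
      Tendsto (fun T : ℕ => R' T / (T : ℝ) ^ a) atTop (𝓝 0)) :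
    ENNReal.ofReal (1 / lam) ≤
      Filter.liminf (fun T : ℕ => ENNReal.ofReal (N T / Real.log T)) atTop := by
  refine ENNReal.ofReal_le_liminf_ofReal fun b hb => ?_
  set a := 1 - b * lam
  have ha : 0 < a := by rw [lt_div_iff₀ hlam] at hb; linarith
  have hc4 : 0 < c / 4 := by positivity
  obtain ⟨hR, hR'⟩ := hgood a ha
  have hsum : Tendsto (fun T : ℕ => (R T + R' T) / (T : ℝ) ^ a) atTop (𝓝 0) := by
    simpa only [add_div, add_zero] using hR.add hR'
  filter_upwards [eventually_le_mul_rpow_of_tendsto_div hsum hc4, eventually_gt_atTop 1]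
    with T hsmall hT
  have hexp : (T : ℝ) * exp (-lam * N T) ≤ (T : ℝ) ^ a := by
    refine le_of_mul_le_mul_left ?_ hc4
    calc c / 4 * ((T : ℝ) * exp (-lam * N T)) = c * T / 4 * exp (-lam * N T) := by ring
      _ ≤ R T + R' T := hineq T
      _ ≤ c / 4 * (T : ℝ) ^ a := hsmall
  have hb_eq : (1 - a) / lam = b := by field_simp; ring
  exact hb_eq ▸ one_sub_div_le_div_log_of_mul_exp_le (by exact_mod_cast hT) hlam hexp

/-- Abstract form of the regret lower bound argument: if
`R(T) + R'(T) ≥ (c T / 4) exp(−λ N(T))` with `c, λ > 0`, the functions `N, R, R'` are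
nonnegative, and `R(T)/T^a → 0`, `R'(T)/T^a → 0` for every `a > 0` (uniform goodness),
then `liminf_{T → ∞} N(T) / log T ≥ 1/λ`. -/
theorem uniformly_good_liminf_lower_bound
    (N R R' : ℕ → ℝ) (c lam : ℝ) (hc : 0 < c) (hlam : 0 < lam)
    (hN : ∀ T, 0 ≤ N T) (hR : ∀ T, 0 ≤ R T) (hR' : ∀ T, 0 ≤ R' T)
    (hineq : ∀ T : ℕ, (c * T / 4) * Real.exp (-lam * N T) ≤ R T + R' T)
    (hgood : ∀ a : ℝ, 0 < a →
      Tendsto (fun T : ℕ => R T / (T : ℝ) ^ a) atTop (𝓝 0) ∧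
      Tendsto (fun T : ℕ => R' T / (T : ℝ) ^ a) atTop (𝓝 0)) :
    ENNReal.ofReal (1 / lam) ≤
      Filter.liminf (fun T : ℕ => ENNReal.ofReal (N T / Real.log T)) atTop :=
  uniformly_good_liminf_lower_bound_general N R R' c lam hc hlam hineq hgood
end
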